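/- arXiv:2409.18504 — 2 statements merged into one kernel-verified Lean document; each statement's English description precedes it below -/
import Mathlib

section
/- Let X = {x_1,...,x_N} in R^d with N = K*c, let P be an optimal balanced K-means partition (minimizing sum over p of Var(X_p) over all partitions of [N] into K groups of size c), and let Q be any partition in Q(P) (formed by selecting one point from each group of P for each group of Q). Then the Wasserstein barycenter of the empirical measures {X_q : q in Q} with uniform weights equals the uniform empirical measure on the centroids {E(X_p) : p in P}; that is, W_2(bar{X}_Q, E(X_P)) = 0. -/
/-! Sending every point to the centroid of its group of `P` is a transport map from each `X_q`
onto the centroids, because `q` meets every group of `P` exactly once; hence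
`∑_q W₂²(X_q, E(X_P)) ≤ (c / K) ∑_p Var(X_p)`. Conversely, let `b` be any `K` points. By
Birkhoff's theorem an optimal coupling between `X_q` and `b` can be taken to be a matching
`σ_q`, and relabelling every point of `X_q` by `σ_q` yields a new balanced partition `P'`. By
optimality of `P`, and since a mean minimises the sum of squared distances,
`(c / K) ∑_p Var(X_p) ≤ (c / K) ∑_p' Var(X_p') ≤ ∑_q W₂²(X_q, b)`. -/

open Finset

noncomputable def emean {d : ℕ} {ι : Type*} [Fintype ι] (s : Finset ι)
    (x : ι → EuclideanSpace ℝ (Fin d)) : EuclideanSpace ℝ (Fin d) :=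
  (s.card : ℝ)⁻¹ • ∑ i ∈ s, x i

noncomputable def evar {d : ℕ} {ι : Type*} [Fintype ι] (s : Finset ι)
    (x : ι → EuclideanSpace ℝ (Fin d)) : ℝ :=
  (s.card : ℝ)⁻¹ * ∑ i ∈ s, ‖x i - emean s x‖ ^ 2

/-- The group of index `k` in the partition encoded by `P`. -/
def grp {N K : ℕ} (P : Fin N → Fin K) (k : Fin K) : Finset (Fin N) :=
  Finset.univ.filter (fun i => P i = k)

/-- Squared Wasserstein-2 distance between the uniform empirical measures on the
points `x i, i ∈ s` and `y j, j ∈ t`, as an infimum over couplings. -/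
noncomputable def W2sq {d : ℕ} {ι κ : Type*} [Fintype ι] [Fintype κ]
    (s : Finset ι) (x : ι → EuclideanSpace ℝ (Fin d))
    (t : Finset κ) (y : κ → EuclideanSpace ℝ (Fin d)) : ℝ :=
  sInf { C | ∃ π : ι → κ → ℝ, (∀ i j, 0 ≤ π i j) ∧
    (∀ i ∈ s, ∑ j ∈ t, π i j = (s.card : ℝ)⁻¹) ∧
    (∀ j ∈ t, ∑ i ∈ s, π i j = (t.card : ℝ)⁻¹) ∧
    C = ∑ i ∈ s, ∑ j ∈ t, π i j * ‖x i - y j‖ ^ 2 }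

/-- `Q` is a selection partition from `P`: every group of `Q` contains exactly one
point of every group of `P`. -/
def Selection {N K c : ℕ} (P : Fin N → Fin K) (Q : Fin N → Fin c) : Prop :=
  ∀ j k, (Finset.univ.filter (fun i => Q i = j ∧ P i = k)).card = 1

/-- `b` is a (uniform-weight) Wasserstein barycenter of the empirical measures of the
groups of `Q`, among uniform empirical measures on `m` points. -/
def IsBary {d N c m : ℕ} (x : Fin N → EuclideanSpace ℝ (Fin d)) (Q : Fin N → Fin c)
    (b : Fin m → EuclideanSpace ℝ (Fin d)) : Prop :=
  ∀ b' : Fin m → EuclideanSpace ℝ (Fin d),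
    ∑ j, W2sq (grp Q j) x Finset.univ b ≤ ∑ j, W2sq (grp Q j) x Finset.univ b'


section Variance

variable {d : ℕ} {ι : Type*} [Fintype ι]

lemma card_mul_evar (s : Finset ι) (x : ι → EuclideanSpace ℝ (Fin d)) :
    (#s : ℝ) * evar s x = ∑ i ∈ s, ‖x i - emean s x‖ ^ 2 := by
  rcases s.eq_empty_or_nonempty with rfl | hs
  · simp
  · rw [evar, ← mul_assoc, mul_inv_cancel₀ (by positivity), one_mul]

lemma sum_sub_emean (s : Finset ι) (x : ι → EuclideanSpace ℝ (Fin d)) :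
    ∑ i ∈ s, (x i - emean s x) = 0 := by
  rcases s.eq_empty_or_nonempty with rfl | hs
  · simp
  · rw [sum_sub_distrib, sum_const, emean, ← Nat.cast_smul_eq_nsmul ℝ, smul_smul,
      mul_inv_cancel₀ (by positivity), one_smul, sub_self]

lemma sum_norm_sub_emean_sq_le (s : Finset ι) (x : ι → EuclideanSpace ℝ (Fin d))
    (y : EuclideanSpace ℝ (Fin d)) :
    ∑ i ∈ s, ‖x i - emean s x‖ ^ 2 ≤ ∑ i ∈ s, ‖x i - y‖ ^ 2 := by
  set μ := emean s x
  have hsplit : ∀ i, ‖x i - y‖ ^ 2 =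
      ‖x i - μ‖ ^ 2 + 2 * inner ℝ (x i - μ) (μ - y) + ‖μ - y‖ ^ 2 := fun i => by
    rw [← sub_add_sub_cancel (x i) μ y, norm_add_sq_real]
  have hcross : ∑ i ∈ s, inner ℝ (x i - μ) (μ - y) = 0 := by
    rw [← sum_inner, sum_sub_emean, inner_zero_left]
  simp only [hsplit, sum_add_distrib, ← mul_sum, hcross, mul_zero, add_zero]
  exact le_add_of_nonneg_right (sum_nonneg fun _ _ => by positivity)

end Variance

section Partition

variable {d N K : ℕ} (x : Fin N → EuclideanSpace ℝ (Fin d)) (P : Fin N → Fin K)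

lemma sum_eq_sum_grp {M : Type*} [AddCommMonoid M] (f : Fin K → Fin N → M) :
    ∑ i, f (P i) i = ∑ k, ∑ i ∈ grp P k, f k i := by
  rw [← sum_fiberwise univ P]
  refine sum_congr rfl fun k _ => sum_congr rfl fun i hi => ?_
  rw [(mem_filter.1 hi).2]

lemma sum_norm_sub_emean_grp_sq {c : ℕ} (hP : ∀ k, #(grp P k) = c) :
    ∑ i, ‖x i - emean (grp P (P i)) x‖ ^ 2 = c * ∑ k, evar (grp P k) x := by
  rw [sum_eq_sum_grp P (fun k i => ‖x i - emean (grp P k) x‖ ^ 2), mul_sum]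
  exact sum_congr rfl fun k _ => by rw [← hP k, card_mul_evar]

lemma sum_norm_sub_emean_grp_sq_le (b : Fin K → EuclideanSpace ℝ (Fin d)) :
    ∑ i, ‖x i - emean (grp P (P i)) x‖ ^ 2 ≤ ∑ i, ‖x i - b (P i)‖ ^ 2 := by
  rw [sum_eq_sum_grp P (fun k i => ‖x i - emean (grp P k) x‖ ^ 2),
    sum_eq_sum_grp P (fun k i => ‖x i - b k‖ ^ 2)]
  exact sum_le_sum fun k _ => sum_norm_sub_emean_sq_le _ x (b k)

end Partition

namespace Selection

variable {N K c : ℕ} {P : Fin N → Fin K} {Q : Fin N → Fin c}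

lemma bijective (hQ : Selection P Q) : Function.Bijective fun i => (Q i, P i) :=
  (Function.bijective_iff_existsUnique _).2 fun ⟨j, k⟩ => by
    simpa [Prod.ext_iff] using card_eq_one_iff_existsUnique.1 (hQ j k)

noncomputable def equiv (hQ : Selection P Q) : Fin N ≃ Fin c × Fin K :=
  Equiv.ofBijective _ hQ.bijective

noncomputable def row (hQ : Selection P Q) (j : Fin c) : Fin K ↪ Fin N :=
  ⟨fun k => hQ.equiv.symm (j, k), fun k k' h => by simpa using hQ.equiv.symm.injective h⟩

lemma apply_row (hQ : Selection P Q) (j : Fin c) (k : Fin K) :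
    (Q (hQ.row j k), P (hQ.row j k)) = (j, k) :=
  Equiv.ofBijective_apply_symm_apply _ hQ.bijective (j, k)

lemma grp_eq_map (hQ : Selection P Q) (j : Fin c) : grp Q j = univ.map (hQ.row j) := by
  ext i
  simp only [grp, mem_filter, mem_univ, true_and, mem_map]
  constructor
  · rintro rfl
    exact ⟨P i, hQ.equiv.symm_apply_eq.2 rfl⟩
  · rintro ⟨k, rfl⟩
    exact congrArg Prod.fst (hQ.apply_row j k)

lemma sum_sum_row (hQ : Selection P Q) {M : Type*} [AddCommMonoid M] (f : Fin N → M) :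
    ∑ j, ∑ k, f (hQ.row j k) = ∑ i, f i := by
  rw [← Fintype.sum_prod_type' fun j k => f (hQ.row j k)]
  exact hQ.equiv.symm.sum_comp f

lemma card_grp (hQ : Selection P Q) (k : Fin K) : #(grp P k) = c := by
  rw [grp, card_eq_sum_card_fiberwise (f := Q) (t := univ) fun i _ => mem_univ _]
  have hfiber : ∀ j, #{i | P i = k ∧ Q i = j} = 1 := fun j => by
    simpa only [and_comm] using hQ j k
  simp [filter_filter, hfiber]

lemma perm (hQ : Selection P Q) (σ : Fin c → Equiv.Perm (Fin K)) :
    Selection (fun i => σ (Q i) (P i)) Q := fun j k => by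
  rw [← hQ j ((σ j).symm k)]
  congr 1
  refine filter_congr fun i _ => and_congr_right fun hi => ?_
  simp only [hi, Equiv.eq_symm_apply]

end Selection

theorem exists_perm_sum_le_of_mem_doublyStochastic {R n : Type*} [Field R] [LinearOrder R]
    [IsStrictOrderedRing R] [Fintype n] [DecidableEq n] (w : Matrix n n R)
    {M : Matrix n n R} (hM : M ∈ doublyStochastic R n) :
    ∃ σ : Equiv.Perm n, ∑ a, w a (σ a) ≤ ∑ a, ∑ b, w a b * M a b := by
  let f : Matrix n n R →ₗ[R] R := ∑ a, ∑ b, w a b • Matrix.entryLinearMap R R a b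
  rw [← SetLike.mem_coe, doublyStochastic_eq_convexHull_permMatrix] at hM
  obtain ⟨_, ⟨σ, rfl⟩, hσ⟩ :=
    (f.concaveOn convex_univ).exists_le_of_mem_convexHull (Set.subset_univ _) hM
  refine ⟨σ, le_of_eq_of_le ?_ (by simpa [f] using hσ)⟩
  simp

section Wasserstein

variable {d : ℕ} {ι κ α : Type*}

def couplingCosts (s : Finset ι) (x : ι → EuclideanSpace ℝ (Fin d))
    (t : Finset κ) (y : κ → EuclideanSpace ℝ (Fin d)) : Set ℝ :=
  { C | ∃ π : ι → κ → ℝ, (∀ i j, 0 ≤ π i j) ∧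
    (∀ i ∈ s, ∑ j ∈ t, π i j = (s.card : ℝ)⁻¹) ∧
    (∀ j ∈ t, ∑ i ∈ s, π i j = (t.card : ℝ)⁻¹) ∧
    C = ∑ i ∈ s, ∑ j ∈ t, π i j * ‖x i - y j‖ ^ 2 }

lemma W2sq_eq_sInf_couplingCosts [Fintype ι] [Fintype κ] (s : Finset ι)
    (x : ι → EuclideanSpace ℝ (Fin d)) (t : Finset κ)
    (y : κ → EuclideanSpace ℝ (Fin d)) :
    W2sq s x t y = sInf (couplingCosts s x t y) :=
  rfl

lemma bddBelow_couplingCosts (s : Finset ι) (x : ι → EuclideanSpace ℝ (Fin d))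
    (t : Finset κ) (y : κ → EuclideanSpace ℝ (Fin d)) :
    BddBelow (couplingCosts s x t y) := by
  refine ⟨0, ?_⟩
  rintro _ ⟨π, hπ, -, -, rfl⟩
  exact sum_nonneg fun i _ => sum_nonneg fun j _ => mul_nonneg (hπ i j) (by positivity)

lemma graph_mem_couplingCosts [Fintype α] (e : α ↪ ι) (x : ι → EuclideanSpace ℝ (Fin d))
    (y : α → EuclideanSpace ℝ (Fin d)) :
    (Fintype.card α : ℝ)⁻¹ * ∑ a, ‖x (e a) - y a‖ ^ 2 ∈
      couplingCosts (univ.map e) x univ y := by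
  classical
  refine ⟨fun i a => if i = e a then (Fintype.card α : ℝ)⁻¹ else 0,
    fun i a => by positivity, by simp, by simp, by simp [mul_sum]⟩

lemma W2sq_map_le [Fintype ι] [Fintype α] (e : α ↪ ι) (x : ι → EuclideanSpace ℝ (Fin d))
    (y : α → EuclideanSpace ℝ (Fin d)) :
    W2sq (univ.map e) x univ y ≤
      (Fintype.card α : ℝ)⁻¹ * ∑ a, ‖x (e a) - y a‖ ^ 2 := by
  rw [W2sq_eq_sInf_couplingCosts]
  exact csInf_le (bddBelow_couplingCosts _ x _ y) (graph_mem_couplingCosts e x y)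

lemma exists_perm_le_W2sq [Fintype ι] [Fintype α] (e : α ↪ ι)
    (x : ι → EuclideanSpace ℝ (Fin d)) (y : α → EuclideanSpace ℝ (Fin d)) :
    ∃ σ : Equiv.Perm α, (Fintype.card α : ℝ)⁻¹ * ∑ a, ‖x (e a) - y (σ a)‖ ^ 2 ≤
      W2sq (univ.map e) x univ y := by
  classical
  set n : ℝ := (Fintype.card α : ℝ)
  obtain ⟨σ, -, hσ⟩ := univ.exists_min_image
    (fun σ : Equiv.Perm α => ∑ a, ‖x (e a) - y (σ a)‖ ^ 2) univ_nonempty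
  rw [W2sq_eq_sInf_couplingCosts]
  refine ⟨σ, le_csInf ⟨_, graph_mem_couplingCosts e x y⟩ ?_⟩
  rintro _ ⟨π, hπ, hrow, hcol, rfl⟩
  -- `α` may be empty, so `n ≠ 0` is only available in the presence of an element
  have hn (a : α) : n ≠ 0 := Nat.cast_ne_zero.2 (Fintype.card_pos_iff.2 ⟨a⟩).ne'
  let M : Matrix α α ℝ := fun a b => n * π (e a) b
  have hM : M ∈ doublyStochastic ℝ α := by
    refine mem_doublyStochastic_iff_sum.2 ⟨fun a b => mul_nonneg (Nat.cast_nonneg _) (hπ _ _),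
      fun a => ?_, fun b => ?_⟩
    · rw [← mul_sum, hrow _ (mem_map_of_mem e (mem_univ a)), card_map, card_univ]
      exact mul_inv_cancel₀ (hn a)
    · rw [← mul_sum, ← sum_map univ e (π · b), hcol b (mem_univ b), card_univ]
      exact mul_inv_cancel₀ (hn b)
  obtain ⟨τ, hτ⟩ := exists_perm_sum_le_of_mem_doublyStochastic
    (fun a b => ‖x (e a) - y b‖ ^ 2) hM
  calc n⁻¹ * ∑ a, ‖x (e a) - y (σ a)‖ ^ 2
      ≤ n⁻¹ * ∑ a, ∑ b, ‖x (e a) - y b‖ ^ 2 * M a b :=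
        mul_le_mul_of_nonneg_left ((hσ τ (mem_univ τ)).trans hτ)
          (inv_nonneg.2 (Nat.cast_nonneg _))
    _ = ∑ i ∈ univ.map e, ∑ b, π i b * ‖x i - y b‖ ^ 2 := by
        rw [sum_map, mul_sum]
        refine sum_congr rfl fun a _ => ?_
        simp only [mul_sum, M]
        refine sum_congr rfl fun b _ => ?_
        field_simp [hn a]

end Wasserstein

theorem barycenter_of_selection_eq_centroids_general {d N K c : ℕ}
    (x : Fin N → EuclideanSpace ℝ (Fin d)) (P : Fin N → Fin K)
    (hPopt : ∀ P' : Fin N → Fin K, (∀ k, (grp P' k).card = c) →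
      ∑ k, evar (grp P k) x ≤ ∑ k, evar (grp P' k) x)
    (Q : Fin N → Fin c) (hQ : Selection P Q) :
    IsBary x Q (fun k => emean (grp P k) x) := by
  intro b
  set m := fun k => emean (grp P k) x
  have hrow (j : Fin c) (k : Fin K) : Q (hQ.row j k) = j ∧ P (hQ.row j k) = k :=
    Prod.ext_iff.1 (hQ.apply_row j k)
  choose σ hσ using fun j => exists_perm_le_W2sq (hQ.row j) x b
  set P' : Fin N → Fin K := fun i => σ (Q i) (P i)
  have hP' : Selection P' Q := hQ.perm σ
  calc ∑ j, W2sq (grp Q j) x univ m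
      ≤ ∑ j, (K : ℝ)⁻¹ * ∑ k, ‖x (hQ.row j k) - m (P (hQ.row j k))‖ ^ 2 :=
        sum_le_sum fun j _ => by simpa [hQ.grp_eq_map, hrow] using W2sq_map_le (hQ.row j) x m
    _ = (K : ℝ)⁻¹ * (c * ∑ k, evar (grp P k) x) := by
        rw [← mul_sum, hQ.sum_sum_row fun i => ‖x i - m (P i)‖ ^ 2,
          sum_norm_sub_emean_grp_sq x P hQ.card_grp]
    _ ≤ (K : ℝ)⁻¹ * (c * ∑ k, evar (grp P' k) x) := by
        gcongr _ * (_ * ?_)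
        exact hPopt P' hP'.card_grp
    _ = (K : ℝ)⁻¹ * ∑ i, ‖x i - emean (grp P' (P' i)) x‖ ^ 2 := by
        rw [sum_norm_sub_emean_grp_sq x P' hP'.card_grp]
    _ ≤ (K : ℝ)⁻¹ * ∑ i, ‖x i - b (P' i)‖ ^ 2 := by
        gcongr _ * ?_
        exact sum_norm_sub_emean_grp_sq_le x P' b
    _ = ∑ j, (K : ℝ)⁻¹ * ∑ k, ‖x (hQ.row j k) - b (σ j k)‖ ^ 2 := by
        rw [← hQ.sum_sum_row, mul_sum]
        simp [P', hrow]
    _ ≤ ∑ j, W2sq (grp Q j) x univ b := by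
        gcongr with j
        simpa [hQ.grp_eq_map] using hσ j

/-- if `P` is an optimal balanced K-means partition of `[N]` (`N = K*c`)
into `K` groups of size `c`, and `Q ∈ Q(P)` selects one point per group of `P`, then the
uniform empirical measure on the centroids `E(X_p)` is a Wasserstein barycenter of the
subgroup measures `{X_q : q ∈ Q}`, i.e. `W₂(bar X_Q, E(X_P)) = 0`. -/
theorem barycenter_of_selection_eq_centroids {d N K c : ℕ}
    (hK : 0 < K) (hc : 0 < c) (hN : N = K * c)
    (x : Fin N → EuclideanSpace ℝ (Fin d)) (P : Fin N → Fin K)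
    (hPbal : ∀ k, (grp P k).card = c)
    (hPopt : ∀ P' : Fin N → Fin K, (∀ k, (grp P' k).card = c) →
      ∑ k, evar (grp P k) x ≤ ∑ k, evar (grp P' k) x)
    (Q : Fin N → Fin c) (hQ : Selection P Q) :
    IsBary x Q (fun k => emean (grp P k) x) :=
  barycenter_of_selection_eq_centroids_general x P hPopt Q hQ
end

section
/- Let X = {x_1,...,x_N} in R^d with N = K*c, P a partition into K groups of size c, and Q' = Q({T_p}) the partition in Q(P) constructed by matching via the optimal transport maps T_p from the Wasserstein barycenter bar{X}_P to each X_p. Then for every Q in Q(P), the average within-subgroup variance satisfies (1/|Q'|) * sum over q in Q' of Var(X_q) <= (1/|Q|) * sum over q in Q of Var(X_q). -/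
/-!
Encode `Q ∈ Q(P)` by `σ`, with `σ p j` the point of `P`-group `p` in `Q`-group `j`. Since a mean
minimises the sum of squared distances, for every `m : Fin c → ℝᵈ` the average within-group
variance of `Q` is at most `(1/K) ∑_p (1/c) ∑_j ‖m_j - x_{σ p j}‖²`, with equality when `m_j` is the
mean of the `j`-th group of `Q`; each inner sum is the cost of a transport plan from `m` to `X_p`,
hence at least `W₂²(m, X_p)`. For `Q'` and `m = X̄_P` the inner sums are optimal costs, so with `m`
the group means of `Q` the barycenter property gives
`avgVar Q' ≤ (1/K) ∑_p W₂²(X̄_P, X_p) ≤ (1/K) ∑_p W₂²(m, X_p) ≤ avgVar Q`.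
-/

open Finset

section Variance

variable {d : ℕ} {ι : Type*} [Fintype ι]

lemma sum_norm_sub_sq_eq_sum_norm_sub_emean_sq_add (s : Finset ι)
    (x : ι → EuclideanSpace ℝ (Fin d)) (m : EuclideanSpace ℝ (Fin d)) :
    ∑ i ∈ s, ‖x i - m‖ ^ 2 = ∑ i ∈ s, ‖x i - emean s x‖ ^ 2 + #s * ‖emean s x - m‖ ^ 2 := by
  rcases s.eq_empty_or_nonempty with rfl | hs
  · simp
  have hcard : (#s : ℝ) ≠ 0 := Nat.cast_ne_zero.mpr hs.card_ne_zero
  have hcentered : ∑ i ∈ s, (x i - emean s x) = 0 := by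
    rw [sum_sub_distrib, sum_const, ← Nat.cast_smul_eq_nsmul ℝ, emean, smul_smul,
      mul_inv_cancel₀ hcard, one_smul, sub_self]
  set μ := emean s x
  calc ∑ i ∈ s, ‖x i - m‖ ^ 2
      = ∑ i ∈ s, (‖x i - μ‖ ^ 2 + 2 * inner ℝ (x i - μ) (μ - m) + ‖μ - m‖ ^ 2) := by
        refine sum_congr rfl fun i _ => ?_
        rw [← norm_add_sq_real, sub_add_sub_cancel]
    _ = ∑ i ∈ s, ‖x i - μ‖ ^ 2 + #s * ‖μ - m‖ ^ 2 := by
        rw [sum_add_distrib, sum_add_distrib, ← mul_sum, ← sum_inner, hcentered]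
        simp

lemma evar_le (s : Finset ι) (x : ι → EuclideanSpace ℝ (Fin d)) (m : EuclideanSpace ℝ (Fin d)) :
    evar s x ≤ (#s : ℝ)⁻¹ * ∑ i ∈ s, ‖x i - m‖ ^ 2 := by
  rw [evar, sum_norm_sub_sq_eq_sum_norm_sub_emean_sq_add s x m]
  gcongr
  exact le_add_of_nonneg_right (by positivity)

end Variance

section Wasserstein

variable {d : ℕ} {ι κ : Type*} [Fintype ι] [Fintype κ]

lemma W2sq_le_of_coupling {s : Finset ι} {x : ι → EuclideanSpace ℝ (Fin d)}
    {t : Finset κ} {y : κ → EuclideanSpace ℝ (Fin d)}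
    (π : ι → κ → ℝ) (hπ : ∀ i j, 0 ≤ π i j)
    (hrow : ∀ i ∈ s, ∑ j ∈ t, π i j = (#s : ℝ)⁻¹)
    (hcol : ∀ j ∈ t, ∑ i ∈ s, π i j = (#t : ℝ)⁻¹) :
    W2sq s x t y ≤ ∑ i ∈ s, ∑ j ∈ t, π i j * ‖x i - y j‖ ^ 2 := by
  refine csInf_le ⟨0, ?_⟩ ⟨π, hπ, hrow, hcol, rfl⟩
  rintro _ ⟨π', hπ', -, -, rfl⟩
  exact sum_nonneg fun i _ => sum_nonneg fun j _ => mul_nonneg (hπ' i j) (sq_nonneg _)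

lemma W2sq_comm (s : Finset ι) (x : ι → EuclideanSpace ℝ (Fin d))
    (t : Finset κ) (y : κ → EuclideanSpace ℝ (Fin d)) :
    W2sq s x t y = W2sq t y s x := by
  unfold W2sq
  congr 1
  ext C
  constructor <;> rintro ⟨π, hπ, hrow, hcol, rfl⟩ <;>
    refine ⟨fun j i => π i j, fun j i => hπ i j, hcol, hrow, ?_⟩ <;>
    rw [sum_comm] <;> simp only [norm_sub_rev]

-- The coupling is the plan sending each `y j` to `x (f j)`.
lemma W2sq_univ_le_of_bijection {s : Finset ι} (x : ι → EuclideanSpace ℝ (Fin d))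
    (y : κ → EuclideanSpace ℝ (Fin d)) {f : κ → ι} {g : ι → κ} (hf : ∀ j, f j ∈ s)
    (hgf : ∀ j, g (f j) = j) (hfg : ∀ i ∈ s, f (g i) = i) :
    W2sq univ y s x ≤ (Fintype.card κ : ℝ)⁻¹ * ∑ j, ‖y j - x (f j)‖ ^ 2 := by
  have hcard : #s = Fintype.card κ :=
    (card_nbij' g f (fun _ _ => mem_univ _) (fun j _ => hf j) hfg (fun j _ => hgf j)).trans
      card_univ
  classical
  set π : κ → ι → ℝ := fun j i => if i = f j then (Fintype.card κ : ℝ)⁻¹ else 0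
  have hrow : ∀ j ∈ (univ : Finset κ), ∑ i ∈ s, π j i = (#(univ : Finset κ) : ℝ)⁻¹ := by
    intro j _
    simp [π, hf j]
  have hcol : ∀ i ∈ s, ∑ j, π j i = (#s : ℝ)⁻¹ := by
    intro i hi
    have hiff : ∀ j, i = f j ↔ g i = j := fun j =>
      ⟨fun h => h ▸ hgf j, fun h => h ▸ (hfg i hi).symm⟩
    simp [π, hiff, hcard]
  refine (W2sq_le_of_coupling π (fun j i => by positivity) hrow hcol).trans_eq ?_
  rw [mul_sum]
  refine sum_congr rfl fun j _ => ?_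
  simp [π, hf j]

end Wasserstein

structure IsGridInverse {N K c : ℕ} (P : Fin N → Fin K) (Q : Fin N → Fin c)
    (σ : Fin K → Fin c → Fin N) : Prop where
  fst_apply : ∀ p j, P (σ p j) = p
  snd_apply : ∀ p j, Q (σ p j) = j
  apply_fst_snd : ∀ i, σ (P i) (Q i) = i

lemma Selection.exists_isGridInverse {N K c : ℕ} {P : Fin N → Fin K} {Q : Fin N → Fin c}
    (hQ : Selection P Q) : ∃ σ, IsGridInverse P Q σ := by
  choose σ hσ using fun p j => card_eq_one.mp (hQ j p)
  have hmem : ∀ p j i, Q i = j ∧ P i = p ↔ i = σ p j := fun p j i => by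
    simpa using Finset.ext_iff.mp (hσ p j) i
  exact ⟨σ, fun p j => ((hmem p j _).2 rfl).2, fun p j => ((hmem p j _).2 rfl).1,
    fun i => ((hmem _ _ i).1 ⟨rfl, rfl⟩).symm⟩

lemma isGridInverse_of_injective {N K c : ℕ} {P : Fin N → Fin K} {Q : Fin N → Fin c}
    {T : Fin K → Fin c → Fin N} (hPbal : ∀ k, #(grp P k) = c) (hTmem : ∀ p j, P (T p j) = p)
    (hTinj : ∀ p, Function.Injective (T p)) (hQT : ∀ p j, Q (T p j) = j) :
    IsGridInverse P Q T := by
  refine ⟨hTmem, hQT, fun i => ?_⟩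
  have hmem : ∀ p j, T p j ∈ grp P p := fun p j => by simp [grp, hTmem]
  obtain ⟨j, -, hj⟩ := surj_on_of_inj_on_of_card_le (s := univ) (fun j _ => T (P i) j)
    (fun j _ => hmem _ j) (fun _ _ _ _ h => hTinj _ h) (by simp [hPbal]) i (by simp [grp])
  have hQi : Q i = j := by rw [hj, hQT]
  rw [hQi, ← hj]

lemma mul_sum_mul_sum_comm {α β R : Type*} [CommSemiring R] (s : Finset α) (t : Finset β)
    (a b : R) (f : α → β → R) :
    a * ∑ x ∈ s, b * ∑ y ∈ t, f x y = b * ∑ y ∈ t, a * ∑ x ∈ s, f x y := by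
  simp only [mul_sum]
  rw [sum_comm]
  simp only [mul_left_comm a b]

namespace IsGridInverse

variable {d N K c : ℕ} {P : Fin N → Fin K} {Q : Fin N → Fin c} {σ : Fin K → Fin c → Fin N}

lemma apply_fst_of_mem (h : IsGridInverse P Q σ) {i : Fin N} {j : Fin c} (hi : i ∈ grp Q j) :
    σ (P i) j = i :=
  (mem_filter.mp hi).2 ▸ h.apply_fst_snd i

lemma apply_snd_of_mem (h : IsGridInverse P Q σ) {i : Fin N} {p : Fin K} (hi : i ∈ grp P p) :
    σ p (Q i) = i :=
  (mem_filter.mp hi).2 ▸ h.apply_fst_snd i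

lemma sum_grp (h : IsGridInverse P Q σ) {M : Type*} [AddCommMonoid M] (f : Fin N → M)
    (j : Fin c) : ∑ i ∈ grp Q j, f i = ∑ p, f (σ p j) :=
  sum_nbij' P (σ · j) (fun _ _ => mem_univ _) (fun p _ => by simp [grp, h.snd_apply])
    (fun _ hi => h.apply_fst_of_mem hi) (fun p _ => h.fst_apply p j)
    (fun _ hi => by rw [h.apply_fst_of_mem hi])

lemma card_grp (h : IsGridInverse P Q σ) (j : Fin c) : #(grp Q j) = K := by
  rw [card_eq_sum_ones, h.sum_grp]
  simp

lemma evar_grp (h : IsGridInverse P Q σ) (x : Fin N → EuclideanSpace ℝ (Fin d)) (j : Fin c) :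
    evar (grp Q j) x = (K : ℝ)⁻¹ * ∑ p, ‖emean (grp Q j) x - x (σ p j)‖ ^ 2 := by
  simp [evar, h.card_grp, h.sum_grp, norm_sub_rev]

lemma evar_grp_le (h : IsGridInverse P Q σ) (x : Fin N → EuclideanSpace ℝ (Fin d))
    (m : EuclideanSpace ℝ (Fin d)) (j : Fin c) :
    evar (grp Q j) x ≤ (K : ℝ)⁻¹ * ∑ p, ‖m - x (σ p j)‖ ^ 2 := by
  simpa [h.card_grp, h.sum_grp, norm_sub_rev] using evar_le (grp Q j) x m

lemma W2sq_le (h : IsGridInverse P Q σ) (x : Fin N → EuclideanSpace ℝ (Fin d))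
    (m : Fin c → EuclideanSpace ℝ (Fin d)) (p : Fin K) :
    W2sq univ m (grp P p) x ≤ (c : ℝ)⁻¹ * ∑ j, ‖m j - x (σ p j)‖ ^ 2 := by
  simpa using W2sq_univ_le_of_bijection (s := grp P p) x m (fun j => by simp [grp, h.fst_apply])
    (h.snd_apply p) (fun _ hi => h.apply_snd_of_mem hi)

lemma avg_evar_le (h : IsGridInverse P Q σ) (x : Fin N → EuclideanSpace ℝ (Fin d))
    (m : Fin c → EuclideanSpace ℝ (Fin d)) :
    (c : ℝ)⁻¹ * ∑ j, evar (grp Q j) x ≤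
      (K : ℝ)⁻¹ * ∑ p, (c : ℝ)⁻¹ * ∑ j, ‖m j - x (σ p j)‖ ^ 2 := by
  rw [mul_sum_mul_sum_comm]
  gcongr with j
  exact h.evar_grp_le x (m j) j

lemma avg_evar_eq (h : IsGridInverse P Q σ) (x : Fin N → EuclideanSpace ℝ (Fin d)) :
    (c : ℝ)⁻¹ * ∑ j, evar (grp Q j) x =
      (K : ℝ)⁻¹ * ∑ p, (c : ℝ)⁻¹ * ∑ j, ‖emean (grp Q j) x - x (σ p j)‖ ^ 2 := by
  simp only [mul_sum_mul_sum_comm _ _ (K : ℝ)⁻¹, h.evar_grp]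

end IsGridInverse

theorem matching_minimizes_average_within_variance_general {d N K c : ℕ}
    (x : Fin N → EuclideanSpace ℝ (Fin d)) (P : Fin N → Fin K)
    (hPbal : ∀ k, (grp P k).card = c)
    (b : Fin c → EuclideanSpace ℝ (Fin d)) (hb : IsBary x P b)
    (T : Fin K → Fin c → Fin N)
    (hTmem : ∀ p j, P (T p j) = p)
    (hTinj : ∀ p, Function.Injective (T p))
    (hTopt : ∀ p, (c : ℝ)⁻¹ * ∑ j, ‖b j - x (T p j)‖ ^ 2
      = W2sq Finset.univ b (grp P p) x)
    (Q' : Fin N → Fin c) (hQT : ∀ p j, Q' (T p j) = j) :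
    ∀ Q : Fin N → Fin c, Selection P Q →
      (c : ℝ)⁻¹ * ∑ j, evar (grp Q' j) x ≤ (c : ℝ)⁻¹ * ∑ j, evar (grp Q j) x := by
  intro Q hQ
  obtain ⟨σ, hσ⟩ := hQ.exists_isGridInverse
  have hT : IsGridInverse P Q' T := isGridInverse_of_injective hPbal hTmem hTinj hQT
  set m : Fin c → EuclideanSpace ℝ (Fin d) := fun j => emean (grp Q j) x
  calc (c : ℝ)⁻¹ * ∑ j, evar (grp Q' j) x
      ≤ (K : ℝ)⁻¹ * ∑ p, (c : ℝ)⁻¹ * ∑ j, ‖b j - x (T p j)‖ ^ 2 := hT.avg_evar_le x b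
    _ = (K : ℝ)⁻¹ * ∑ p, W2sq univ b (grp P p) x := by simp only [hTopt]
    _ ≤ (K : ℝ)⁻¹ * ∑ p, W2sq univ m (grp P p) x := by
        refine mul_le_mul_of_nonneg_left ?_ (by positivity)
        simpa only [W2sq_comm univ] using hb m
    _ ≤ (K : ℝ)⁻¹ * ∑ p, (c : ℝ)⁻¹ * ∑ j, ‖m j - x (σ p j)‖ ^ 2 := by
        gcongr with p
        exact hσ.W2sq_le x m p
    _ = (c : ℝ)⁻¹ * ∑ j, evar (grp Q j) x := (hσ.avg_evar_eq x).symm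

/-- the selection partition `Q'` constructed by matching along optimal
transport maps `T_p` from the Wasserstein barycenter `bar X_P` to each group measure `X_p`
minimizes the average within-subgroup variance among all selection partitions `Q ∈ Q(P)`. -/
theorem matching_minimizes_average_within_variance {d N K c : ℕ}
    (hK : 0 < K) (hc : 0 < c) (hN : N = K * c)
    (x : Fin N → EuclideanSpace ℝ (Fin d)) (P : Fin N → Fin K)
    (hPbal : ∀ k, (grp P k).card = c)
    (b : Fin c → EuclideanSpace ℝ (Fin d)) (hb : IsBary x P b)
    (T : Fin K → Fin c → Fin N)
    (hTmem : ∀ p j, P (T p j) = p)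
    (hTinj : ∀ p, Function.Injective (T p))
    (hTopt : ∀ p, (c : ℝ)⁻¹ * ∑ j, ‖b j - x (T p j)‖ ^ 2
      = W2sq Finset.univ b (grp P p) x)
    (Q' : Fin N → Fin c) (hQT : ∀ p j, Q' (T p j) = j) :
    ∀ Q : Fin N → Fin c, Selection P Q →
      (c : ℝ)⁻¹ * ∑ j, evar (grp Q' j) x ≤ (c : ℝ)⁻¹ * ∑ j, evar (grp Q j) x :=
  matching_minimizes_average_within_variance_general x P hPbal b hb T hTmem hTinj hTopt Q' hQT
end
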